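/- Let A be a complex matrix indexed by (Fin m × Fin m) rows and (Fin n × Fin n) columns. If the block vec matrix vec^{(m×n)}(A) is symmetric (equal to its transpose) and has rank 1, then there exists an m×n complex matrix B such that A = B ⊗ B. -/

import Mathlib

open Matrix Kronecker

/-- The block vec matrix of an `mp × nq` matrix `A`, viewed as an `m × n` block matrix
with `p × q` blocks: its entry in row `(i, j)` and column `(k, l)` is `A (i, k) (j, l)`. -/
def blockVec {𝕜 : Type*} {m n p q : ℕ} (A : Matrix (Fin m × Fin p) (Fin n × Fin q) 𝕜) :
    Matrix (Fin m × Fin n) (Fin p × Fin q) 𝕜 :=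
  Matrix.of fun r c => A (r.1, c.1) (r.2, c.2)

/-! A rank-one matrix is an outer product `u vᵀ`; symmetry forces `u = c • v`, and over `ℂ`
taking `s² = c` rewrites it as `w wᵀ` with `w = s • v`. Since `blockVec (B ⊗ₖ C)` is the outer
product of the entry vectors of `B` and `C`, reading `w` as an `m × n` matrix gives the square
root `B`. -/

namespace Matrix

variable {K m n : Type*} [Field K]

theorem exists_eq_vecMulVec_of_rank_le_one [Fintype n] {M : Matrix m n K} (h : M.rank ≤ 1) :
    ∃ u v, M = vecMulVec u v := by
  have := FiniteDimensional.span_of_finite K (Set.finite_range M.col)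
  rw [rank_eq_finrank_span_cols, Submodule.finrank_le_one_iff_isPrincipal] at h
  obtain ⟨u, hu⟩ := h
  have hcol : ∀ j, ∃ c : K, c • u = Mᵀ j := fun j =>
    Submodule.mem_span_singleton.mp (hu ▸ Submodule.subset_span (Set.mem_range_self j))
  choose v hv using hcol
  refine ⟨u, v, ext fun i j => ?_⟩
  rw [vecMulVec_apply, mul_comm, ← transpose_apply M, ← hv j, Pi.smul_apply, smul_eq_mul]

theorem exists_eq_smul_of_vecMulVec_isSymm {u v : n → K} (h : (vecMulVec u v).IsSymm)
    (hv : v ≠ 0) : ∃ c : K, u = c • v := by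
  obtain ⟨j, hj⟩ := Function.ne_iff.mp hv
  refine ⟨u j / v j, funext fun i => ?_⟩
  have hij : u i * v j = u j * v i := by
    simpa only [transpose_apply, vecMulVec_apply] using congrFun (congrFun h j) i
  rw [Pi.smul_apply, smul_eq_mul, div_mul_eq_mul_div, eq_div_iff hj, ← hij]

theorem IsSymm.exists_eq_vecMulVec_self [IsAlgClosed K] [Fintype n] {M : Matrix n n K}
    (hM : M.IsSymm) (h : M.rank ≤ 1) : ∃ w, M = vecMulVec w w := by
  obtain ⟨u, v, rfl⟩ := exists_eq_vecMulVec_of_rank_le_one h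
  obtain rfl | hv := eq_or_ne v 0
  · exact ⟨0, by ext; simp⟩
  obtain ⟨c, rfl⟩ := exists_eq_smul_of_vecMulVec_isSymm hM hv
  obtain ⟨s, rfl⟩ := IsAlgClosed.exists_pow_nat_eq c two_pos
  refine ⟨s • v, Matrix.ext fun i j => ?_⟩
  simp only [vecMulVec_apply, Pi.smul_apply, smul_eq_mul]
  ring

end Matrix

section BlockVec

variable {𝕜 : Type*} {m n p q : ℕ}

theorem blockVec_injective :
    Function.Injective (blockVec : Matrix (Fin m × Fin p) (Fin n × Fin q) 𝕜 → _) :=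
  fun _ _ h => ext fun r c => congrFun (congrFun h (r.1, c.1)) (r.2, c.2)

theorem blockVec_kronecker [Mul 𝕜] (B : Matrix (Fin m) (Fin n) 𝕜) (C : Matrix (Fin p) (Fin q) 𝕜) :
    blockVec (B ⊗ₖ C) = vecMulVec (Function.uncurry B) (Function.uncurry C) :=
  rfl

end BlockVec

theorem exists_kronecker_sqrt_of_blockVec_isSymm_rank_one {m n : ℕ}
    (A : Matrix (Fin m × Fin m) (Fin n × Fin n) ℂ)
    (hsymm : (blockVec A).IsSymm) (hrank : (blockVec A).rank = 1) :
    ∃ B : Matrix (Fin m) (Fin n) ℂ, A = B ⊗ₖ B := by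
  obtain ⟨w, hw⟩ := hsymm.exists_eq_vecMulVec_self hrank.le
  exact ⟨of (Function.curry w), blockVec_injective (by rw [hw, blockVec_kronecker]; rfl)⟩
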